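/- For each subset h ⊆ K, the dimension of the interaction subspace U_h equals ∏_{k ∈ h} (I_k − 1), with the convention that the empty product equals 1. -/

import Mathlib

open scoped RealInnerProductSpace

variable {K : Type*} [Fintype K] [DecidableEq K]

/-- The subspace `W h` of `ℝ^I` (with `I = ∏ k, Fin (I k)`, standard inner product)
consisting of functions depending only on the coordinates indexed by `h`. -/
def cellW (I : K → ℕ) (h : Finset K) :
    Submodule ℝ (EuclideanSpace ℝ (∀ k, Fin (I k))) where
  carrier := {f | ∀ i j : ∀ k, Fin (I k), (∀ k ∈ h, i k = j k) → f i = f j}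
  add_mem' := by
    intro f g hf hg i j hij
    simp only [PiLp.add_apply, hf i j hij, hg i j hij]
  zero_mem' := by intro i j _; rfl
  smul_mem' := by
    intro c f hf i j hij
    simp only [PiLp.smul_apply, hf i j hij]

/-- The interaction subspace `U h = W h ∩ (∑_{h' ⊊ h} W h')ᗮ`. -/
noncomputable def cellU (I : K → ℕ) (h : Finset K) :
    Submodule ℝ (EuclideanSpace ℝ (∀ k, Fin (I k))) :=
  cellW I h ⊓ (⨆ h' ∈ h.ssubsets, cellW I h')ᗮ

/-!
Let `T h = ⨆_{h' ⊊ h} W h'`, so that `W h = T h ⊕ U h` orthogonally. Summing over the `k`-th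
coordinate is a self-adjoint operator which multiplies functions not depending on that coordinate
by `I k`. For `g ∈ U h₂` and `k ∈ h₂`, it sends `g` into `W (h₂ \ {k}) ⊆ T h₂ ⊥ g`, hence to `0`;
so `g ⊥ W h₁` whenever `k ∉ h₁`. Thus the `U h` are pairwise orthogonal and, by induction,
`W h = ⨁_{h' ⊆ h} U h'`. Comparing `dim W h = ∏_{k ∈ h} ((I k - 1) + 1)
= ∑_{h' ⊆ h} ∏_{k ∈ h'} (I k - 1)` with `∑_{h' ⊆ h} dim U h'` and inverting over subsets
gives the claim.
-/

open Finset Function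

set_option linter.unusedSectionVars false

theorem Finset.eq_of_forall_sum_powerset_eq {α M : Type*} [DecidableEq α] [AddCancelCommMonoid M]
    {f g : Finset α → M} (hfg : ∀ s : Finset α, ∑ t ∈ s.powerset, f t = ∑ t ∈ s.powerset, g t) :
    f = g := by
  funext s
  induction s using strongInduction with
  | H s ih =>
    have hsplit (φ : Finset α → M) :
        ∑ t ∈ s.powerset, φ t = ∑ t ∈ s.ssubsets, φ t + φ s :=
      (sum_erase_add _ _ (mem_powerset_self s)).symm
    have hssub : ∑ t ∈ s.ssubsets, f t = ∑ t ∈ s.ssubsets, g t :=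
      sum_congr rfl fun t ht => ih t (mem_ssubsets.1 ht)
    simpa only [hsplit, hssub, add_right_inj] using hfg s

theorem Submodule.finrank_biSup_of_pairwise_isOrtho {𝕜 E ι : Type*} [RCLike 𝕜]
    [NormedAddCommGroup E] [InnerProductSpace 𝕜 E] [FiniteDimensional 𝕜 E] [DecidableEq ι]
    (s : Finset ι) {V : ι → Submodule 𝕜 E} (hV : (s : Set ι).Pairwise fun a b => V a ⟂ V b) :
    Module.finrank 𝕜 (⨆ a ∈ s, V a : Submodule 𝕜 E) = ∑ a ∈ s, Module.finrank 𝕜 (V a) := by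
  induction s using Finset.induction with
  | empty => simp
  | insert a s ha ih =>
    rw [coe_insert, Set.pairwise_insert] at hV
    have hortho : V a ⟂ ⨆ b ∈ s, V b :=
      isOrtho_iSup_right.2 fun b => isOrtho_iSup_right.2 fun hb =>
        (hV.2 b hb (ne_of_mem_of_not_mem hb ha).symm).1
    have hsum := finrank_sup_add_finrank_inf_eq (V a) (⨆ b ∈ s, V b)
    rw [hortho.disjoint.eq_bot, finrank_bot, add_zero] at hsum
    rw [Finset.iSup_insert, sum_insert ha, hsum, ih hV.1]

variable {I : K → ℕ}

lemma cellW_mono {h₁ h₂ : Finset K} (hsub : h₁ ⊆ h₂) : cellW I h₁ ≤ cellW I h₂ :=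
  fun _ hf i j hij => hf i j fun k hk => hij k (hsub hk)

noncomputable def cellWEquivFun (hI : ∀ k, 1 ≤ I k) (h : Finset K) :
    cellW I h ≃ₗ[ℝ] ((∀ k : h, Fin (I k)) → ℝ) where
  toFun f x := (f : EuclideanSpace ℝ (∀ k, Fin (I k)))
    fun k => if hk : k ∈ h then x ⟨k, hk⟩ else ⟨0, hI k⟩
  map_add' _ _ := rfl
  map_smul' _ _ := rfl
  invFun g := ⟨WithLp.toLp 2 fun y => g (h.restrict y),
    fun _ _ hij => congrArg g (funext fun k => hij k k.2)⟩
  left_inv f := Subtype.ext <| PiLp.ext fun y => f.2 _ y fun k hk => by simp [hk]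
  right_inv g := funext fun x => congrArg g (funext fun k => by simp)

lemma finrank_cellW (hI : ∀ k, 1 ≤ I k) (h : Finset K) :
    Module.finrank ℝ (cellW I h) = ∏ k ∈ h, I k := by
  rw [(cellWEquivFun hI h).finrank_eq, Module.finrank_fintype_fun_eq_card, Fintype.card_pi]
  simp only [Fintype.card_fin]
  exact prod_coe_sort h I

noncomputable def sumCoord (k : K) (f : EuclideanSpace ℝ (∀ k, Fin (I k))) :
    EuclideanSpace ℝ (∀ k, Fin (I k)) :=
  WithLp.toLp 2 fun x => ∑ a, f (update x k a)

lemma sumCoord_mem_cellW_erase (k : K) {h : Finset K} {f : EuclideanSpace ℝ (∀ k, Fin (I k))}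
    (hf : f ∈ cellW I h) : sumCoord k f ∈ cellW I (h.erase k) := by
  intro i j hij
  simp only [sumCoord, PiLp.toLp_apply]
  refine sum_congr rfl fun a _ => hf _ _ fun l hl => ?_
  by_cases hlk : l = k
  · subst hlk
    simp
  · simp [update_of_ne hlk, hij l (mem_erase.2 ⟨hlk, hl⟩)]

lemma sumCoord_eq_smul_of_mem_cellW {k : K} {h : Finset K} (hk : k ∉ h)
    {f : EuclideanSpace ℝ (∀ k, Fin (I k))} (hf : f ∈ cellW I h) :
    sumCoord k f = (I k : ℝ) • f := by
  ext x
  have hconst (a : Fin (I k)) : f (update x k a) = f x :=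
    hf _ _ fun l hl => update_of_ne (ne_of_mem_of_not_mem hl hk) _ _
  simp [sumCoord, hconst]

lemma inner_sumCoord_left (k : K) (f g : EuclideanSpace ℝ (∀ k, Fin (I k))) :
    ⟪sumCoord k f, g⟫ = ⟪f, sumCoord k g⟫ := by
  simp only [sumCoord, PiLp.inner_apply, RCLike.inner_apply, conj_trivial, sum_mul, mul_sum]
  rw [← Fintype.sum_prod_type', ← Fintype.sum_prod_type']
  -- `(x, a) ↦ (update x k a, x k)` is an involution carrying one side onto the other.
  refine Fintype.sum_equiv (Involutive.toPerm (fun p => (update p.1 k p.2, p.1 k)) ?_) _ _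
    fun p => ?_
  · intro p
    simp only [update_idem, update_eq_self, update_self]
  · simp [Involutive.toPerm]

lemma inner_eq_zero_of_mem_cellW_of_mem_cellU (hI : ∀ k, 1 ≤ I k) {h₁ h₂ : Finset K}
    (hsub : ¬ h₂ ⊆ h₁) {f g : EuclideanSpace ℝ (∀ k, Fin (I k))}
    (hf : f ∈ cellW I h₁) (hg : g ∈ cellU I h₂) : ⟪f, g⟫ = 0 := by
  obtain ⟨k, hk₂, hk₁⟩ := not_subset.1 hsub
  have hG : sumCoord k g ∈ cellW I (h₂.erase k) := sumCoord_mem_cellW_erase k hg.1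
  -- `sumCoord k g` depends on fewer coordinates than `g`, so it is orthogonal to `g`.
  have hGg : ⟪sumCoord k g, g⟫ = 0 :=
    Submodule.inner_right_of_mem_orthogonal
      (le_biSup (fun h' => cellW I h') (mem_ssubsets.2 (erase_ssubset hk₂)) hG) hg.2
  have hG0 : sumCoord k g = 0 := by
    rw [← inner_self_eq_zero (𝕜 := ℝ)]
    calc ⟪sumCoord k g, sumCoord k g⟫ = ⟪g, sumCoord k (sumCoord k g)⟫ := by
          rw [real_inner_comm, inner_sumCoord_left]
      _ = 0 := by
        rw [sumCoord_eq_smul_of_mem_cellW (notMem_erase k h₂) hG, real_inner_smul_right,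
          real_inner_comm, hGg, mul_zero]
  have hIk : (I k : ℝ) ≠ 0 := Nat.cast_ne_zero.2 (Nat.one_le_iff_ne_zero.1 (hI k))
  have : (I k : ℝ) * ⟪f, g⟫ = 0 := by
    rw [← real_inner_smul_left, ← sumCoord_eq_smul_of_mem_cellW hk₁ hf, inner_sumCoord_left, hG0,
      inner_zero_right]
  exact (mul_eq_zero.1 this).resolve_left hIk

lemma cellU_isOrtho (hI : ∀ k, 1 ≤ I k) {h₁ h₂ : Finset K} (hne : h₁ ≠ h₂) :
    cellU I h₁ ⟂ cellU I h₂ := by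
  rw [Submodule.isOrtho_iff_inner_eq]
  intro f hf g hg
  by_cases h₂₁ : h₂ ⊆ h₁
  · rw [real_inner_comm]
    exact inner_eq_zero_of_mem_cellW_of_mem_cellU hI (fun h₁₂ => hne (h₁₂.antisymm h₂₁)) hg.1 hf
  · exact inner_eq_zero_of_mem_cellW_of_mem_cellU hI h₂₁ hf.1 hg

lemma iSup_ssubsets_cellW_sup_cellU (h : Finset K) :
    (⨆ h' ∈ h.ssubsets, cellW I h') ⊔ cellU I h = cellW I h := by
  rw [cellU, inf_comm]
  exact Submodule.sup_orthogonal_inf_of_hasOrthogonalProjection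
    (iSup₂_le fun h' hh' => cellW_mono (mem_ssubsets.1 hh').subset)

lemma iSup_powerset_cellU (h : Finset K) : ⨆ h' ∈ h.powerset, cellU I h' = cellW I h := by
  induction h using strongInduction with
  | H h ih =>
    refine le_antisymm (iSup₂_le fun h' hh' => inf_le_left.trans
      (cellW_mono (mem_powerset.1 hh'))) ?_
    rw [← iSup_ssubsets_cellW_sup_cellU]
    refine sup_le (iSup₂_le fun h' hh' => ?_) (le_biSup (fun t => cellU I t) (mem_powerset_self h))
    rw [← ih h' (mem_ssubsets.1 hh')]
    exact biSup_mono fun t ht =>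
      mem_powerset.2 ((mem_powerset.1 ht).trans (mem_ssubsets.1 hh').subset)

lemma finrank_cellW_eq_sum_finrank_cellU (hI : ∀ k, 1 ≤ I k) (h : Finset K) :
    Module.finrank ℝ (cellW I h) = ∑ h' ∈ h.powerset, Module.finrank ℝ (cellU I h') := by
  rw [← iSup_powerset_cellU, Submodule.finrank_biSup_of_pairwise_isOrtho]
  exact fun _ _ _ _ hne => cellU_isOrtho hI hne

/-- The dimension of the interaction subspace `U h` equals `∏_{k ∈ h} (I k − 1)`. -/
theorem finrank_cellU (I : K → ℕ) (hI : ∀ k, 1 ≤ I k) (h : Finset K) :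
    Module.finrank ℝ (cellU I h) = ∏ k ∈ h, (I k - 1) := by
  have hsum (s : Finset K) : ∑ t ∈ s.powerset, Module.finrank ℝ (cellU I t)
      = ∑ t ∈ s.powerset, ∏ k ∈ t, (I k - 1) := by
    rw [← finrank_cellW_eq_sum_finrank_cellU hI, finrank_cellW hI, ← prod_add_one]
    exact prod_congr rfl fun k _ => (Nat.sub_add_cancel (hI k)).symm
  exact congrFun (eq_of_forall_sum_powerset_eq hsum) h
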